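/- Let μ > 1, Λ ∈ ℝ with Λ < 1/2, and suppose {C_n} is a nonzero solution of d_{n+1}C_{n+1} + 2μ y_n(Λ)C_n + d_n C_{n−1} = 0 (d_0 = 0) with {C_n} ∈ ℓ²(ℕ₀), where d_n = n^{1/2}(n²−1/4)^{1/4} and y_n(Λ) = (n+1/2)^{1/2}√(n+1/2−Λ) > 0. Then ∑_n y_n(Λ)|C_n|² < ∞ and the quadratic form identity ∑_{n=0}^N 2μ y_n(Λ)|C_n|² + 2 Re ∑_{n=1}^N d_n C_n conj(C_{n−1}) = −d_{N+1} Re(C_{N+1} conj(C_N)) holds for all N (where the right side tends to 0 if d_{N+1}C_{N+1}conj(C_N) → 0). -/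

import Mathlib

/-- Off-diagonal Jacobi entries `d_n = n^{1/2}(n²−1/4)^{1/4}` (so `d_0 = 0`). -/
noncomputable def dEnt (n : ℕ) : ℝ :=
  Real.sqrt n * ((n : ℝ) ^ 2 - 1 / 4) ^ ((1 : ℝ) / 4)

/-- For real `Λ < 1/2`, `y_n(Λ) = (n+1/2)^{1/2} √(n+1/2−Λ) > 0`. -/
noncomputable def yR (n : ℕ) (Λ : ℝ) : ℝ :=
  Real.sqrt ((n : ℝ) + 1 / 2) * Real.sqrt ((n : ℝ) + 1 / 2 - Λ)

/-!
Multiplying the recurrence by `conj (C n)` and taking real parts, the cross terms telescope,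
which gives the identity. With `|d n| ≤ n ≤ y n` and `2|ab| ≤ |a|² + |b|²` the identity turns into
`4(μ - 1) ∑_{n ≤ N} y n |C n|² ≤ 2 ∑ |C n|² + (N + 1)(|C (N+1)|² + |C N|²)`. As `∑ |C n|² < ∞`,
the last term is at most `1` for infinitely many `N`, so for `μ > 1` the partial sums of
`y n |C n|²` are bounded.
-/

open Finset Filter ComplexConjugate

theorem Complex.re_mul_conj_comm (z w : ℂ) : (z * conj w).re = (w * conj z).re := by
  rw [← Complex.conj_re, map_mul, Complex.conj_conj, mul_comm]

theorem Finset.sum_Icc_one_sub_one {M : Type*} [AddCommMonoid M] (f : ℕ → M) (N : ℕ) :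
    ∑ n ∈ Icc 1 N, f (n - 1) = ∑ n ∈ range N, f n := by
  induction N with
  | zero => simp
  | succ N ih => rw [sum_Icc_succ_top (Nat.le_add_left 1 N), sum_range_succ, ih, Nat.add_sub_cancel]

theorem neg_two_mul_re_mul_conj_le {δ t : ℝ} (h : |δ| ≤ t) (z w : ℂ) :
    -(2 * δ * (z * conj w).re) ≤ t * (‖z‖ ^ 2 + ‖w‖ ^ 2) := by
  have hre : -(δ * (z * conj w).re) ≤ |δ| * (‖z‖ * ‖w‖) := by
    calc -(δ * (z * conj w).re) ≤ |δ * (z * conj w).re| := neg_le_abs _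
      _ ≤ |δ| * (‖z‖ * ‖w‖) := by
        rw [abs_mul, ← Complex.norm_conj w, ← norm_mul]
        exact mul_le_mul_of_nonneg_left (Complex.abs_re_le_norm _) (abs_nonneg δ)
  have hamgm : 2 * (‖z‖ * ‖w‖) ≤ ‖z‖ ^ 2 + ‖w‖ ^ 2 := by
    nlinarith [sq_nonneg (‖z‖ - ‖w‖)]
  nlinarith [mul_le_mul h hamgm (by positivity) ((abs_nonneg δ).trans h)]

theorem exists_ge_add_one_mul_le_one_of_summable {f : ℕ → ℝ} (hf : Summable f) (N : ℕ) :
    ∃ m ≥ N, ((m : ℝ) + 1) * f m ≤ 1 := by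
  refine Frequently.forall_exists_of_atTop (fun hev => ?_) N
  have hharm : Summable fun n : ℕ => 1 / ((n : ℝ) + 1) := by
    refine hf.of_norm_bounded_eventually_nat (hev.mono fun n hn => ?_)
    rw [Real.norm_of_nonneg (by positivity), div_le_iff₀ (by positivity)]
    linarith [not_le.1 hn]
  exact Real.not_summable_one_div_natCast <| (summable_nat_add_iff 1).1 <| by
    simpa using hharm

section JacobiRecurrence

variable {d y : ℕ → ℝ} {μ : ℝ} {C : ℕ → ℂ}

theorem re_recurrence_mul_conj
    (hrec : ∀ n : ℕ, (d (n + 1) : ℂ) * C (n + 1) + 2 * (μ : ℂ) * (y n : ℂ) * C n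
      + (d n : ℂ) * C (n - 1) = 0) (n : ℕ) :
    d (n + 1) * (C (n + 1) * conj (C n)).re + 2 * μ * y n * ‖C n‖ ^ 2
      + d n * (C n * conj (C (n - 1))).re = 0 := by
  have h := congrArg (fun z => (z * conj (C n)).re) (hrec n)
  have hdiag : (2 * (μ : ℂ) * (y n : ℂ) * C n * conj (C n)).re = 2 * μ * y n * ‖C n‖ ^ 2 := by
    rw [mul_assoc _ (C n), Complex.mul_conj']
    norm_cast
  simp only [add_mul, Complex.add_re, hdiag, mul_assoc (d _ : ℂ), Complex.re_ofReal_mul, zero_mul,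
    Complex.zero_re] at h
  rwa [Complex.re_mul_conj_comm (C n)]

theorem sum_energy_eq (hd : d 0 = 0)
    (hrec : ∀ n : ℕ, (d (n + 1) : ℂ) * C (n + 1) + 2 * (μ : ℂ) * (y n : ℂ) * C n
      + (d n : ℂ) * C (n - 1) = 0) (N : ℕ) :
    (∑ n ∈ range (N + 1), 2 * μ * y n * ‖C n‖ ^ 2)
        + 2 * (∑ n ∈ Icc 1 N, (d n : ℂ) * C n * conj (C (n - 1))).re
      = -(d (N + 1)) * (C (N + 1) * conj (C N)).re := by
  induction N with
  | zero =>
    have h := re_recurrence_mul_conj hrec 0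
    simp only [hd, zero_mul, add_zero] at h
    simp only [zero_add, range_one, sum_singleton, Icc_eq_empty_of_lt Nat.zero_lt_one, sum_empty,
      Complex.zero_re, mul_zero, add_zero]
    linarith
  | succ N ih =>
    have h := re_recurrence_mul_conj hrec (N + 1)
    rw [sum_range_succ, sum_Icc_succ_top (Nat.le_add_left 1 N), Complex.add_re,
      mul_assoc (d (N + 1) : ℂ), Complex.re_ofReal_mul, Nat.add_sub_cancel]
    rw [Nat.add_sub_cancel] at h
    linarith

theorem neg_two_mul_re_sum_le (hdn : ∀ n, |d n| ≤ n) (hy : ∀ n : ℕ, (n : ℝ) ≤ y n) (N : ℕ) :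
    -(2 * (∑ n ∈ Icc 1 N, (d n : ℂ) * C n * conj (C (n - 1))).re)
      ≤ 2 * ∑ n ∈ range (N + 1), y n * ‖C n‖ ^ 2 + ∑ n ∈ range N, ‖C n‖ ^ 2 := by
  have hterm : ∀ n ∈ Icc 1 N, -(2 * ((d n : ℂ) * C n * conj (C (n - 1))).re)
      ≤ y n * ‖C n‖ ^ 2 + (y (n - 1) * ‖C (n - 1)‖ ^ 2 + ‖C (n - 1)‖ ^ 2) := by
    intro n _
    have hcross := neg_two_mul_re_mul_conj_le (hdn n) (C n) (C (n - 1))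
    have hshift : (n : ℝ) ≤ y (n - 1) + 1 := by
      have hprev := hy (n - 1)
      have hcast : (n : ℝ) ≤ ((n - 1 : ℕ) : ℝ) + 1 := by exact_mod_cast (by omega : n ≤ n - 1 + 1)
      linarith
    rw [mul_assoc (d n : ℂ), Complex.re_ofReal_mul, ← mul_assoc]
    nlinarith [mul_le_mul_of_nonneg_right (hy n) (sq_nonneg ‖C n‖),
      mul_le_mul_of_nonneg_right hshift (sq_nonneg ‖C (n - 1)‖)]
  have hsub : ∑ n ∈ Icc 1 N, y n * ‖C n‖ ^ 2 ≤ ∑ n ∈ range (N + 1), y n * ‖C n‖ ^ 2 :=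
    sum_le_sum_of_subset_of_nonneg (fun n hn => mem_range.2 (Nat.lt_succ_of_le (mem_Icc.1 hn).2))
      fun n _ _ => mul_nonneg ((Nat.cast_nonneg n).trans (hy n)) (sq_nonneg _)
  have hprefix : ∑ n ∈ range N, y n * ‖C n‖ ^ 2 ≤ ∑ n ∈ range (N + 1), y n * ‖C n‖ ^ 2 := by
    rw [sum_range_succ]
    exact le_add_of_nonneg_right (mul_nonneg ((Nat.cast_nonneg N).trans (hy N)) (sq_nonneg _))
  calc -(2 * (∑ n ∈ Icc 1 N, (d n : ℂ) * C n * conj (C (n - 1))).re)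
      = ∑ n ∈ Icc 1 N, -(2 * ((d n : ℂ) * C n * conj (C (n - 1))).re) := by
        rw [Complex.re_sum, mul_sum, sum_neg_distrib]
    _ ≤ ∑ n ∈ Icc 1 N, (y n * ‖C n‖ ^ 2 + (y (n - 1) * ‖C (n - 1)‖ ^ 2 + ‖C (n - 1)‖ ^ 2)) :=
        sum_le_sum hterm
    _ = ∑ n ∈ Icc 1 N, y n * ‖C n‖ ^ 2
          + (∑ n ∈ range N, y n * ‖C n‖ ^ 2 + ∑ n ∈ range N, ‖C n‖ ^ 2) := by
        rw [sum_add_distrib, sum_Icc_one_sub_one (fun m => y m * ‖C m‖ ^ 2 + ‖C m‖ ^ 2),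
          sum_add_distrib]
    _ ≤ _ := by linarith

theorem four_mul_sub_one_mul_sum_le (hd : d 0 = 0) (hdn : ∀ n, |d n| ≤ n)
    (hy : ∀ n : ℕ, (n : ℝ) ≤ y n)
    (hrec : ∀ n : ℕ, (d (n + 1) : ℂ) * C (n + 1) + 2 * (μ : ℂ) * (y n : ℂ) * C n
      + (d n : ℂ) * C (n - 1) = 0) (N : ℕ) :
    4 * (μ - 1) * ∑ n ∈ range (N + 1), y n * ‖C n‖ ^ 2
      ≤ 2 * ∑ n ∈ range N, ‖C n‖ ^ 2 + (N + 1) * (‖C (N + 1)‖ ^ 2 + ‖C N‖ ^ 2) := by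
  have henergy := sum_energy_eq hd hrec N
  have hcross := neg_two_mul_re_sum_le (C := C) hdn hy N
  have hboundary := neg_two_mul_re_mul_conj_le (hdn (N + 1)) (C (N + 1)) (C N)
  have hscale : ∑ n ∈ range (N + 1), 2 * μ * y n * ‖C n‖ ^ 2
      = 2 * μ * ∑ n ∈ range (N + 1), y n * ‖C n‖ ^ 2 := by
    rw [mul_sum]
    exact sum_congr rfl fun n _ => mul_assoc _ _ _
  push_cast at hboundary
  linarith

theorem summable_mul_norm_sq (hμ : 1 < μ) (hd : d 0 = 0) (hdn : ∀ n, |d n| ≤ n)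
    (hy : ∀ n : ℕ, (n : ℝ) ≤ y n) (hl2 : Summable fun n => ‖C n‖ ^ 2)
    (hrec : ∀ n : ℕ, (d (n + 1) : ℂ) * C (n + 1) + 2 * (μ : ℂ) * (y n : ℂ) * C n
      + (d n : ℂ) * C (n - 1) = 0) :
    Summable fun n => y n * ‖C n‖ ^ 2 := by
  have hnonneg : ∀ n, 0 ≤ y n * ‖C n‖ ^ 2 :=
    fun n => mul_nonneg ((Nat.cast_nonneg n).trans (hy n)) (sq_nonneg _)
  have hpair : Summable fun n => ‖C (n + 1)‖ ^ 2 + ‖C n‖ ^ 2 :=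
    ((summable_nat_add_iff 1).2 hl2).add hl2
  refine summable_of_sum_range_le (c := (2 * ∑' n, ‖C n‖ ^ 2 + 1) / (4 * (μ - 1))) hnonneg
    fun N => ?_
  -- The boundary term of the energy bound is small along a subsequence.
  obtain ⟨m, hNm, hm⟩ := exists_ge_add_one_mul_le_one_of_summable hpair N
  have hmono : ∑ n ∈ range N, y n * ‖C n‖ ^ 2 ≤ ∑ n ∈ range (m + 1), y n * ‖C n‖ ^ 2 :=
    sum_le_sum_of_subset_of_nonneg (range_subset_range.2 (by omega)) fun n _ _ => hnonneg n
  have hpartial : ∑ n ∈ range m, ‖C n‖ ^ 2 ≤ ∑' n, ‖C n‖ ^ 2 :=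
    hl2.sum_le_tsum _ fun n _ => sq_nonneg _
  have henergy := four_mul_sub_one_mul_sum_le hd hdn hy hrec m
  rw [le_div_iff₀ (by linarith)]
  nlinarith

end JacobiRecurrence

theorem dEnt_zero : dEnt 0 = 0 := by simp [dEnt]

theorem dEnt_nonneg (n : ℕ) : 0 ≤ dEnt n := by
  rcases Nat.eq_zero_or_pos n with rfl | hn
  · rw [dEnt_zero]
  · have h1 : (1 : ℝ) ≤ n := by exact_mod_cast hn
    exact mul_nonneg (Real.sqrt_nonneg _) (Real.rpow_nonneg (by nlinarith) _)

theorem dEnt_le (n : ℕ) : dEnt n ≤ n := by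
  rcases Nat.eq_zero_or_pos n with rfl | hn
  · simp [dEnt_zero]
  have h1 : (1 : ℝ) ≤ n := by exact_mod_cast hn
  have hroot : ((n : ℝ) ^ 2) ^ ((1 : ℝ) / 4) = Real.sqrt n := by
    rw [Real.sqrt_eq_rpow, ← Real.rpow_natCast, ← Real.rpow_mul (Nat.cast_nonneg n)]
    norm_num
  calc dEnt n ≤ Real.sqrt n * ((n : ℝ) ^ 2) ^ ((1 : ℝ) / 4) :=
        mul_le_mul_of_nonneg_left (Real.rpow_le_rpow (by nlinarith) (by linarith) (by norm_num))
          (Real.sqrt_nonneg _)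
    _ = n := by rw [hroot, Real.mul_self_sqrt (Nat.cast_nonneg n)]

theorem natCast_le_yR (n : ℕ) {Λ : ℝ} (hΛ : Λ ≤ 1 / 2) : (n : ℝ) ≤ yR n Λ :=
  calc (n : ℝ) = Real.sqrt n * Real.sqrt n := (Real.mul_self_sqrt (Nat.cast_nonneg n)).symm
    _ ≤ yR n Λ := mul_le_mul (Real.sqrt_le_sqrt (by linarith)) (Real.sqrt_le_sqrt (by linarith))
        (Real.sqrt_nonneg _) (Real.sqrt_nonneg _)

theorem real_energy_identity_general (μ Λ : ℝ) (hμ : 1 < μ) (hΛ : Λ < 1 / 2)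
    (C : ℕ → ℂ) (hl2 : Summable fun n => ‖C n‖ ^ 2)
    (hrec : ∀ n : ℕ,
      (dEnt (n + 1) : ℂ) * C (n + 1) + 2 * (μ : ℂ) * (yR n Λ : ℂ) * C n
        + (dEnt n : ℂ) * C (n - 1) = 0) :
    Summable (fun n => yR n Λ * ‖C n‖ ^ 2) ∧
    ∀ N : ℕ,
      (∑ n ∈ Finset.range (N + 1), 2 * μ * yR n Λ * ‖C n‖ ^ 2)
        + 2 * (∑ n ∈ Finset.Icc 1 N, (dEnt n : ℂ) * C n * (starRingEnd ℂ) (C (n - 1))).re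
      = -(dEnt (N + 1)) * (C (N + 1) * (starRingEnd ℂ) (C N)).re := by
  have hdEnt : ∀ n, |dEnt n| ≤ n := fun n => (abs_of_nonneg (dEnt_nonneg n)).trans_le (dEnt_le n)
  have hyR : ∀ n : ℕ, (n : ℝ) ≤ yR n Λ := fun n => natCast_le_yR n hΛ.le
  exact ⟨summable_mul_norm_sq hμ dEnt_zero hdEnt hyR hl2 hrec, sum_energy_eq dEnt_zero hrec⟩

/-- For `μ > 1`, real `Λ < 1/2` and a nonzero `ℓ²` solution `{C_n}` of
`d_{n+1}C_{n+1} + 2μ y_n(Λ)C_n + d_n C_{n−1} = 0`, one has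
`∑ y_n(Λ)|C_n|² < ∞`, and the quadratic form identity
`∑_{n=0}^N 2μ y_n(Λ)|C_n|² + 2 Re ∑_{n=1}^N d_n C_n conj(C_{n−1})
  = −d_{N+1} Re(C_{N+1} conj(C_N))` holds for all `N`. -/
theorem real_energy_identity (μ Λ : ℝ) (hμ : 1 < μ) (hΛ : Λ < 1 / 2)
    (C : ℕ → ℂ) (hl2 : Summable fun n => ‖C n‖ ^ 2) (hC : ∃ n, C n ≠ 0)
    (hrec : ∀ n : ℕ,
      (dEnt (n + 1) : ℂ) * C (n + 1) + 2 * (μ : ℂ) * (yR n Λ : ℂ) * C n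
        + (dEnt n : ℂ) * C (n - 1) = 0) :
    Summable (fun n => yR n Λ * ‖C n‖ ^ 2) ∧
    ∀ N : ℕ,
      (∑ n ∈ Finset.range (N + 1), 2 * μ * yR n Λ * ‖C n‖ ^ 2)
        + 2 * (∑ n ∈ Finset.Icc 1 N, (dEnt n : ℂ) * C n * (starRingEnd ℂ) (C (n - 1))).re
      = -(dEnt (N + 1)) * (C (N + 1) * (starRingEnd ℂ) (C N)).re :=
  real_energy_identity_general μ Λ hμ hΛ C hl2 hrec
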